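/- arXiv:2010.03402 — 7 statements merged into one kernel-verified Lean document; each statement's English description precedes it below -/
import Mathlib

section
/- For any nonzero z ∈ R^N and any q ∈ (1,∞), ‖z‖₁/‖z‖_∞ ≤ s_q(z), i.e., the limiting sparsity measure s_∞(z) = ‖z‖₁/‖z‖_∞ lower bounds s_q(z). -/
open Finset

/-- The `ℓ_q` quasi-norm `(∑ |z i|^q)^(1/q)` on `Fin N → ℝ`. -/
noncomputable def lqNorm {N : ℕ} (q : ℝ) (z : Fin N → ℝ) : ℝ :=
  (∑ i, |z i| ^ q) ^ (1 / q)

/-- The `ℓ_1` norm. -/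
noncomputable def l1Norm {N : ℕ} (z : Fin N → ℝ) : ℝ := ∑ i, |z i|

/-- The `ℓ_2` norm. -/
noncomputable def l2Norm {N : ℕ} (z : Fin N → ℝ) : ℝ := Real.sqrt (∑ i, (z i) ^ 2)

/-- The `q`-ratio sparsity `s_q(z) = (‖z‖₁/‖z‖_q)^(q/(q-1))`. -/
noncomputable def qSparsity {N : ℕ} (q : ℝ) (z : Fin N → ℝ) : ℝ :=
  (l1Norm z / lqNorm q z) ^ (q / (q - 1))

/-- Number of nonzero entries. -/
noncomputable def l0Norm {N : ℕ} (z : Fin N → ℝ) : ℕ :=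
  (Finset.univ.filter fun i => z i ≠ 0).card

/-- Restriction of `z` to an index set `S` (zero outside `S`). -/
noncomputable def restr {N : ℕ} (z : Fin N → ℝ) (S : Finset (Fin N)) : Fin N → ℝ :=
  fun i => if i ∈ S then z i else 0

/-!
Since every `|z i|` is at most `M = ⨆ i, |z i|`, we get
`‖z‖_q ^ q = ∑ |z i| ^ (q - 1) * |z i| ≤ M ^ (q - 1) * ‖z‖₁`.
Raising `‖z‖₁ / M ≤ (‖z‖₁ / ‖z‖_q) ^ (q / (q - 1))` to the power `q - 1` turns it into exactly
this inequality.
-/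

lemma rpow_eq_rpow_sub_one_mul {x : ℝ} (hx : 0 ≤ x) (q : ℝ) (hq : q ≠ 0) :
    x ^ q = x ^ (q - 1) * x := by
  rw [← Real.rpow_add_one' hx (by simpa using hq), sub_add_cancel]

lemma div_le_rpow_div_of_rpow_le {L M ℓ q : ℝ} (hL : 0 ≤ L) (hM : 0 < M) (hℓ : 0 < ℓ)
    (hq : 1 < q) (h : ℓ ^ q ≤ M ^ (q - 1) * L) : L / M ≤ (L / ℓ) ^ (q / (q - 1)) := by
  have hq1 : 0 < q - 1 := sub_pos.mpr hq
  rw [← Real.rpow_le_rpow_iff (by positivity) (by positivity) hq1, ← Real.rpow_mul (by positivity),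
    div_mul_cancel₀ q hq1.ne', Real.div_rpow hL hM.le, Real.div_rpow hL hℓ.le,
    div_le_div_iff₀ (by positivity) (by positivity)]
  calc L ^ (q - 1) * ℓ ^ q ≤ L ^ (q - 1) * (M ^ (q - 1) * L) := by gcongr
    _ = L ^ q * M ^ (q - 1) := by rw [rpow_eq_rpow_sub_one_mul hL q (by linarith)]; ring

lemma abs_le_iSup_abs {ι : Type*} [Finite ι] (z : ι → ℝ) (i : ι) : |z i| ≤ ⨆ j, |z j| :=
  le_ciSup (f := fun j => |z j|) (Set.finite_range _).bddAbove i

lemma lqNorm_rpow {N : ℕ} {q : ℝ} (hq : q ≠ 0) (z : Fin N → ℝ) :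
    lqNorm q z ^ q = ∑ i, |z i| ^ q := by
  rw [lqNorm, ← Real.rpow_mul (by positivity), one_div_mul_cancel hq, Real.rpow_one]

lemma sum_abs_rpow_le_iSup_rpow_mul_l1Norm {N : ℕ} {q : ℝ} (hq : 1 ≤ q) (z : Fin N → ℝ) :
    ∑ i, |z i| ^ q ≤ (⨆ i, |z i|) ^ (q - 1) * l1Norm z := by
  rw [l1Norm, Finset.mul_sum]
  gcongr with i
  rw [rpow_eq_rpow_sub_one_mul (abs_nonneg _) q (by linarith)]
  gcongr
  exact abs_le_iSup_abs z i

theorem sInfty_le_qSparsity {N : ℕ} (z : Fin N → ℝ) (hz : z ≠ 0) (q : ℝ) (hq : 1 < q) :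
    l1Norm z / (⨆ i, |z i|) ≤ qSparsity q z := by
  obtain ⟨i, hi⟩ := Function.ne_iff.mp hz
  have hzi : 0 < |z i| := abs_pos.mpr hi
  have hM : 0 < ⨆ i, |z i| := hzi.trans_le (abs_le_iSup_abs z i)
  have hsum : 0 < ∑ i, |z i| ^ q :=
    Finset.sum_pos' (fun _ _ => by positivity) ⟨i, Finset.mem_univ _, by positivity⟩
  have hℓ : 0 < lqNorm q z := Real.rpow_pos_of_pos hsum _
  rw [qSparsity]
  refine div_le_rpow_div_of_rpow_le (Finset.sum_nonneg fun _ _ => abs_nonneg _) hM hℓ hq ?_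
  rw [lqNorm_rpow (by linarith)]
  exact sum_abs_rpow_le_iSup_rpow_mul_l1Norm hq.le z
end

section
/- For any 1 < q₁ ≤ q₂ < ∞ and any nonzero z ∈ R^N, s_{q₂}(z) ≤ s_{q₁}(z); consequently the sparsity level sets satisfy S_{q₁,k} ⊆ S_{q₂,k} for every k ≥ 1. -/
open Finset

lemma keyPM {N : ℕ} (p : Fin N → ℝ) (hp : ∀ i, 0 ≤ p i) (hps : ∑ i, p i = 1)
    {r s : ℝ} (hr : 0 < r) (hrs : r ≤ s) :
    (∑ i, p i ^ (r + 1)) ^ (1 / r) ≤ (∑ i, p i ^ (s + 1)) ^ (1 / s) := by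
  have hs : 0 < s := hr.trans_le hrs
  have hterm : ∀ (t : ℝ), 0 < t → ∀ i, p i ^ (t + 1) = p i * p i ^ t := by
    intro t ht i
    rw [add_comm, Real.rpow_add' (hp i) (by positivity)]
    simp
  have hA : (0:ℝ) ≤ ∑ i, p i ^ (r + 1) :=
    Finset.sum_nonneg fun i _ => Real.rpow_nonneg (hp i) _
  have hJ := Real.rpow_arith_mean_le_arith_mean_rpow Finset.univ p (fun i => p i ^ r)
    (fun i _ => hp i) hps (fun i _ => Real.rpow_nonneg (hp i) _)
    ((one_le_div hr).mpr hrs)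
  have e1 : ∀ i, (p i ^ r) ^ (s / r) = p i ^ s := by
    intro i
    rw [← Real.rpow_mul (hp i)]
    congr 1; field_simp
  simp only [e1] at hJ
  calc (∑ i, p i ^ (r + 1)) ^ (1 / r)
      = ((∑ i, p i * p i ^ r) ^ (s / r)) ^ (1 / s) := by
        rw [← Real.rpow_mul (by simpa only [hterm r hr ] using hA)]
        simp only [hterm r hr]
        congr 1; field_simp
    _ ≤ (∑ i, p i * p i ^ s) ^ (1 / s) :=
        Real.rpow_le_rpow (Real.rpow_nonneg (by
          simpa only [hterm r hr] using hA) _) hJ (by positivity)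
    _ = (∑ i, p i ^ (s + 1)) ^ (1 / s) := by simp only [hterm s hs]

lemma qSparsity_eq_inv {N : ℕ} (q : ℝ) (hq : 1 < q) (z : Fin N → ℝ) (hz : z ≠ 0) :
    qSparsity q z = ((∑ i, (|z i| / l1Norm z) ^ q) ^ (1 / (q - 1)))⁻¹ := by
  have hq0 : (0:ℝ) < q := by linarith
  have hq1 : q - 1 ≠ 0 := by intro h; linarith [show q = 1 by linarith]
  obtain ⟨i₀, hi₀⟩ := Function.ne_iff.mp hz
  simp only [Pi.zero_apply] at hi₀
  have hT : 0 < l1Norm z := by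
    exact Finset.sum_pos' (fun i _ => abs_nonneg _)
      ⟨i₀, Finset.mem_univ _, abs_pos.mpr hi₀⟩
  set T := l1Norm z with hTdef
  set S := ∑ i, (|z i| / T) ^ q with hSdef
  have hSnn : (0:ℝ) ≤ S :=
    Finset.sum_nonneg fun i _ => Real.rpow_nonneg (by positivity) _
  have hS : 0 < S := by
    apply Finset.sum_pos' (fun i _ => Real.rpow_nonneg (by positivity) _)
      ⟨i₀, Finset.mem_univ _, Real.rpow_pos_of_pos (by
        exact div_pos (abs_pos.mpr hi₀) hT) _⟩
  have hsum : ∑ i, |z i| ^ q = T ^ q * S := by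
    rw [hSdef, Finset.mul_sum]
    refine Finset.sum_congr rfl fun i _ => ?_
    rw [Real.div_rpow (abs_nonneg _) hT.le]
    field_simp
  have hlq : lqNorm q z = T * S ^ (1 / q) := by
    rw [lqNorm, hsum, Real.mul_rpow (by positivity) hSnn,
      ← Real.rpow_mul hT.le, mul_one_div_cancel hq0.ne']
    norm_num
  have hratio : l1Norm z / lqNorm q z = S ^ (-(1 / q)) := by
    rw [hlq, Real.rpow_neg hSnn, ← hTdef]
    rw [div_mul_eq_div_div, div_self hT.ne']
    exact one_div _
  rw [qSparsity, hratio, ← Real.rpow_mul hSnn]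
  rw [show (-(1/q)) * (q / (q-1)) = -(1/(q-1)) by field_simp]
  rw [Real.rpow_neg hSnn]

theorem qSparsity_antitone {N : ℕ} (q₁ q₂ : ℝ) (hq₁ : 1 < q₁) (hq₁₂ : q₁ ≤ q₂) :
    (∀ z : Fin N → ℝ, z ≠ 0 → qSparsity q₂ z ≤ qSparsity q₁ z) ∧
    (∀ k : ℝ, 1 ≤ k →
      {z : Fin N → ℝ | z ≠ 0 ∧ qSparsity q₁ z ≤ k} ⊆
        {z : Fin N → ℝ | z ≠ 0 ∧ qSparsity q₂ z ≤ k}) := by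
  have hq₂ : 1 < q₂ := lt_of_lt_of_le hq₁ hq₁₂
  have main : ∀ z : Fin N → ℝ, z ≠ 0 → qSparsity q₂ z ≤ qSparsity q₁ z := by
    intro z hz
    obtain ⟨i₀, hi₀⟩ := Function.ne_iff.mp hz
    have hT : 0 < l1Norm z := by
      apply Finset.sum_pos' (fun i _ => abs_nonneg _) ⟨i₀, Finset.mem_univ _, _⟩
      simpa using abs_pos.mpr hi₀
    set p : Fin N → ℝ := fun i => |z i| / l1Norm z with hpdef
    have hp : ∀ i, 0 ≤ p i := fun i => by positivity
    have hps : ∑ i, p i = 1 := by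
      rw [hpdef]
      simp only [← Finset.sum_div]
      exact div_self hT.ne'
    have hkey := keyPM p hp hps (r := q₁ - 1) (s := q₂ - 1)
      (by linarith) (by linarith)
    rw [show q₁ - 1 + 1 = q₁ by ring, show q₂ - 1 + 1 = q₂ by ring] at hkey
    have hX : 0 < (∑ i, p i ^ q₁) ^ (1 / (q₁ - 1)) := by
      apply Real.rpow_pos_of_pos
      apply Finset.sum_pos' (fun i _ => Real.rpow_nonneg (hp i) _)
        ⟨i₀, Finset.mem_univ _, Real.rpow_pos_of_pos (by
          exact div_pos (abs_pos.mpr hi₀) hT) _⟩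
    rw [qSparsity_eq_inv q₁ hq₁ z hz, qSparsity_eq_inv q₂ hq₂ z hz]
    exact inv_anti₀ hX hkey
  exact ⟨main, fun k _ z hz => ⟨hz.1, (main z hz.1).trans hz.2⟩⟩
end

section
/- Let q ∈ (1,∞), z ∈ R^N nonzero, I a subset of the support of z with |I| = t₁ < k, and t₂ = |Iᶜ|. If ‖z_{Iᶜ}‖_q ≤ t₂^{1/q−1}(k^{1−1/q} − t₁^{1−1/q})‖z_I‖_q, then s_q(z) ≤ k. -/
open Finset

lemma holder_aux {N : ℕ} (q : ℝ) (hq : 1 < q) (S : Finset (Fin N)) (f : Fin N → ℝ) :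
    ∑ i ∈ S, |f i| ≤ (S.card : ℝ) ^ (1 - 1/q) * (∑ i ∈ S, |f i| ^ q) ^ (1/q) := by
  have := Real.inner_le_weight_mul_Lp_of_nonneg S hq.le (fun _ => 1) (fun i => |f i|)
    (fun _ => zero_le_one) (fun i => abs_nonneg _)
  simpa [one_div] using this

lemma restr_sum {N : ℕ} (q : ℝ) (hq : 0 < q) (z : Fin N → ℝ) (S : Finset (Fin N)) :
    ∑ i, |restr z S i| ^ q = ∑ i ∈ S, |z i| ^ q := by
  rw [← Finset.sum_subset (Finset.subset_univ S)]
  · exact Finset.sum_congr rfl fun i hi => by simp [restr, hi]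
  · intro i _ hi
    simp [restr, hi, Real.zero_rpow hq.ne']


theorem qSparsity_le_of_tail_small {N : ℕ} (q : ℝ) (hq : 1 < q) (z : Fin N → ℝ) (hz : z ≠ 0)
    (I : Finset (Fin N)) (hI : ∀ i ∈ I, z i ≠ 0) (hInonempty : I.Nonempty)
    (k : ℝ) (hk : (I.card : ℝ) < k)
    (htail : lqNorm q (restr z Iᶜ) ≤
      ((Iᶜ.card : ℝ)) ^ (1 / q - 1) * (k ^ (1 - 1 / q) - (I.card : ℝ) ^ (1 - 1 / q)) *
        lqNorm q (restr z I)) :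
    qSparsity q z ≤ k := by
  have hq0 : (0:ℝ) < q := lt_trans one_pos hq
  have hqe : (0:ℝ) < 1 - 1/q := by
    rw [sub_pos, div_lt_one hq0]; exact hq
  have ht1 : (0:ℝ) < (I.card : ℝ) := by
    exact_mod_cast Finset.card_pos.mpr hInonempty
  have hk0 : (0:ℝ) < k := lt_trans ht1 hk
  set A : ℝ := (∑ i ∈ I, |z i| ^ q) ^ (1/q) with hA
  set B : ℝ := (∑ i ∈ Iᶜ, |z i| ^ q) ^ (1/q) with hB
  have hAnn : 0 ≤ A := Real.rpow_nonneg (Finset.sum_nonneg fun i _ =>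
    Real.rpow_nonneg (abs_nonneg _) _) _
  have hBnn : 0 ≤ B := Real.rpow_nonneg (Finset.sum_nonneg fun i _ =>
    Real.rpow_nonneg (abs_nonneg _) _) _
  have hlqI : lqNorm q (restr z I) = A := by
    rw [lqNorm, restr_sum q hq0]
  have hlqIc : lqNorm q (restr z Iᶜ) = B := by
    rw [lqNorm, restr_sum q hq0]
  rw [hlqI, hlqIc] at htail
  -- k^{1-1/q} ≥ t₁^{1-1/q}
  have hCnn : 0 ≤ k ^ (1 - 1/q) - (I.card : ℝ) ^ (1 - 1/q) := by
    have := Real.rpow_le_rpow ht1.le hk.le hqe.le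
    linarith
  -- lq norm of z
  have hnormnn : 0 ≤ (∑ i, |z i| ^ q : ℝ) := Finset.sum_nonneg fun i _ =>
    Real.rpow_nonneg (abs_nonneg _) _
  have hAle : A ≤ lqNorm q z := by
    apply Real.rpow_le_rpow (Finset.sum_nonneg fun i _ => Real.rpow_nonneg (abs_nonneg _) _)
      (Finset.sum_le_sum_of_subset_of_nonneg (Finset.subset_univ I)
        (fun i _ _ => Real.rpow_nonneg (abs_nonneg _) _)) (by positivity)
  -- positivity of lqNorm z
  obtain ⟨j, hj⟩ : ∃ j, z j ≠ 0 := by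
    by_contra h
    push_neg at h
    exact hz (funext h)
  have hsumpos : 0 < (∑ i, |z i| ^ q : ℝ) := by
    have : 0 < |z j| ^ q := Real.rpow_pos_of_pos (abs_pos.mpr hj) _
    exact lt_of_lt_of_le this (Finset.single_le_sum (fun i _ =>
      Real.rpow_nonneg (abs_nonneg _) _) (Finset.mem_univ j))
  have hnormpos : 0 < lqNorm q z := Real.rpow_pos_of_pos hsumpos _
  -- L1 bound on Iᶜ part
  have hIc : ∑ i ∈ Iᶜ, |z i| ≤ (k ^ (1 - 1/q) - (I.card : ℝ) ^ (1 - 1/q)) * A := by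
    refine le_trans (holder_aux q hq Iᶜ z) ?_
    rcases Nat.eq_zero_or_pos Iᶜ.card with h0 | hpos
    · rw [h0]
      push_cast
      rw [Real.zero_rpow hqe.ne', zero_mul]
      positivity
    · have ht2 : (0:ℝ) < (Iᶜ.card : ℝ) := by exact_mod_cast hpos
      calc ((Iᶜ.card : ℝ)) ^ (1 - 1/q) * B
          ≤ ((Iᶜ.card : ℝ)) ^ (1 - 1/q) *
            (((Iᶜ.card : ℝ)) ^ (1/q - 1) * (k ^ (1 - 1/q) - (I.card : ℝ) ^ (1 - 1/q)) * A) :=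
            mul_le_mul_of_nonneg_left htail (Real.rpow_nonneg ht2.le _)
        _ = (((Iᶜ.card : ℝ)) ^ (1 - 1/q) * ((Iᶜ.card : ℝ)) ^ (1/q - 1)) *
            ((k ^ (1 - 1/q) - (I.card : ℝ) ^ (1 - 1/q)) * A) := by ring
        _ = (k ^ (1 - 1/q) - (I.card : ℝ) ^ (1 - 1/q)) * A := by
            rw [← Real.rpow_add ht2]
            norm_num
  -- L1 bound on I part
  have hII : ∑ i ∈ I, |z i| ≤ (I.card : ℝ) ^ (1 - 1/q) * A := holder_aux q hq I z
  -- total L1 bound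
  have hl1 : l1Norm z ≤ k ^ (1 - 1/q) * lqNorm q z := by
    have hsplit : l1Norm z = ∑ i ∈ I, |z i| + ∑ i ∈ Iᶜ, |z i| :=
      (Finset.sum_add_sum_compl I _).symm
    have : l1Norm z ≤ k ^ (1 - 1/q) * A := by
      rw [hsplit]
      calc ∑ i ∈ I, |z i| + ∑ i ∈ Iᶜ, |z i|
          ≤ (I.card : ℝ) ^ (1 - 1/q) * A + (k ^ (1 - 1/q) - (I.card : ℝ) ^ (1 - 1/q)) * A :=
            add_le_add hII hIc
        _ = k ^ (1 - 1/q) * A := by ring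
    exact le_trans this (mul_le_mul_of_nonneg_left hAle (by positivity))
  -- conclude
  have hratio : l1Norm z / lqNorm q z ≤ k ^ (1 - 1/q) := by
    rw [div_le_iff₀ hnormpos]; exact hl1
  have hratnn : 0 ≤ l1Norm z / lqNorm q z :=
    div_nonneg (Finset.sum_nonneg fun i _ => abs_nonneg _) hnormpos.le
  have hpnn : 0 ≤ q / (q - 1) := by
    apply div_nonneg hq0.le; linarith
  calc qSparsity q z = (l1Norm z / lqNorm q z) ^ (q / (q-1)) := rfl
    _ ≤ (k ^ (1 - 1/q)) ^ (q / (q-1)) := Real.rpow_le_rpow hratnn hratio hpnn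
    _ = k ^ ((1 - 1/q) * (q / (q-1))) := (Real.rpow_mul hk0.le _ _).symm
    _ = k ^ (1:ℝ) := by
        congr 1
        have h1 : q - 1 ≠ 0 := by linarith
        field_simp
    _ = k := Real.rpow_one k
end

section
/- Let A ∈ R^{m×N}, q ∈ (1,∞), and let x ∈ R^N be k-sparse with k < inf{3^{q/(1−q)} s_q(h) : h ∈ ker(A), h ≠ 0}. Then for every h ∈ ker(A)\{0}, ‖x‖₁/‖x‖_q < ‖x+h‖₁/‖x+h‖_q; that is, x is the unique minimizer of ‖z‖₁/‖z‖_q subject to Az = Ax. -/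
open Finset

lemma l1Norm_pos {N : ℕ} {z : Fin N → ℝ} (hz : z ≠ 0) : 0 < l1Norm z := by
  obtain ⟨i, hi⟩ := Function.ne_iff.mp hz
  exact Finset.sum_pos' (fun j _ => abs_nonneg _) ⟨i, mem_univ i, abs_pos.mpr hi⟩

lemma lqNorm_pos {N : ℕ} {q : ℝ} (hq : 0 < q) {z : Fin N → ℝ} (hz : z ≠ 0) :
    0 < lqNorm q z := by
  obtain ⟨i, hi⟩ := Function.ne_iff.mp hz
  have : 0 < ∑ i, |z i| ^ q :=
    Finset.sum_pos' (fun j _ => Real.rpow_nonneg (abs_nonneg _) q)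
      ⟨i, mem_univ i, Real.rpow_pos_of_pos (abs_pos.mpr hi) q⟩
  exact Real.rpow_pos_of_pos this _

lemma holder_subset {N : ℕ} {q : ℝ} (hq : 1 ≤ q) (S : Finset (Fin N)) (z : Fin N → ℝ) :
    ∑ i ∈ S, |z i| ≤ (S.card : ℝ) ^ (1 - q⁻¹) * lqNorm q z := by
  have h := Real.inner_le_weight_mul_Lp_of_nonneg S hq (fun _ => 1) (fun i => |z i|)
    (fun _ => zero_le_one) (fun i => abs_nonneg _)
  simp only [one_mul, Finset.sum_const, nsmul_eq_mul, mul_one] at h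
  refine h.trans (mul_le_mul_of_nonneg_left ?_ (Real.rpow_nonneg (Nat.cast_nonneg _) _))
  rw [lqNorm, one_div]
  refine Real.rpow_le_rpow (Finset.sum_nonneg fun i _ => Real.rpow_nonneg (abs_nonneg _) q)
    (Finset.sum_le_sum_of_subset_of_nonneg (Finset.subset_univ S)
      (fun i _ _ => Real.rpow_nonneg (abs_nonneg _) q)) (by positivity)

theorem exact_recovery_sufficient_condition {m N : ℕ} (A : Matrix (Fin m) (Fin N) ℝ)
    (q : ℝ) (hq : 1 < q) (k : ℕ) (x : Fin N → ℝ) (hx : x ≠ 0) (hsparse : l0Norm x ≤ k)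
    (hcond : ∀ h : Fin N → ℝ, A.mulVec h = 0 → h ≠ 0 →
      (k : ℝ) < (3 : ℝ) ^ (q / (1 - q)) * qSparsity q h) :
    ∀ h : Fin N → ℝ, A.mulVec h = 0 → h ≠ 0 →
      l1Norm x / lqNorm q x < l1Norm (x + h) / lqNorm q (x + h) := by
  intro h hker hh
  have hq0 : 0 < q := lt_trans one_pos hq
  have hqne : q ≠ 0 := ne_of_gt hq0
  have h1q : (1 : ℝ) - q ≠ 0 := sub_ne_zero.mpr hq.ne
  have hq1 : q - 1 ≠ 0 := sub_ne_zero.mpr hq.ne'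
  set a1 := l1Norm x with ha1
  set aq := lqNorm q x with haq
  set b1 := l1Norm h with hb1
  set bq := lqNorm q h with hbq
  set c : ℝ := (k : ℝ) ^ (1 - q⁻¹) with hc
  have a1pos : 0 < a1 := l1Norm_pos hx
  have aqpos : 0 < aq := lqNorm_pos hq0 hx
  have b1pos : 0 < b1 := l1Norm_pos hh
  have bqpos : 0 < bq := lqNorm_pos hq0 hh
  have cnn : 0 ≤ c := Real.rpow_nonneg (Nat.cast_nonneg _) _
  have hee : (q - 1) / q = 1 - q⁻¹ := by rw [sub_div, div_self hqne, one_div]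
  -- key consequence of the hypothesis: 3 * c * bq < b1
  have key : 3 * (c * bq) < b1 := by
    have hcnd := hcond h hker hh
    have he : (0:ℝ) < (q - 1) / q := div_pos (sub_pos.mpr hq) hq0
    have hdnn : (0:ℝ) ≤ b1 / bq := div_nonneg b1pos.le bqpos.le
    have hstep : (k : ℝ) ^ ((q - 1) / q) <
        ((3 : ℝ) ^ (q / (1 - q)) * qSparsity q h) ^ ((q - 1) / q) :=
      Real.rpow_lt_rpow (Nat.cast_nonneg _) hcnd he
    have hrw : ((3 : ℝ) ^ (q / (1 - q)) * qSparsity q h) ^ ((q - 1) / q)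
        = 3⁻¹ * (b1 / bq) := by
      rw [qSparsity, ← hb1, ← hbq,
        Real.mul_rpow (Real.rpow_nonneg (by norm_num) _) (Real.rpow_nonneg hdnn _),
        ← Real.rpow_mul (by norm_num : (0:ℝ) ≤ 3), ← Real.rpow_mul hdnn]
      have e1 : q / (1 - q) * ((q - 1) / q) = -1 := by field_simp; ring
      have e2 : q / (q - 1) * ((q - 1) / q) = 1 := by field_simp
      rw [e1, e2, Real.rpow_neg_one, Real.rpow_one]
    rw [hrw, hee] at hstep
    have hmul := mul_lt_mul_of_pos_right hstep (by positivity : (0:ℝ) < 3 * bq)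
    have hr : 3⁻¹ * (b1 / bq) * (3 * bq) = b1 := by field_simp
    calc 3 * (c * bq) = c * (3 * bq) := by ring
      _ < 3⁻¹ * (b1 / bq) * (3 * bq) := hmul
      _ = b1 := hr
  -- support of x
  set S : Finset (Fin N) := Finset.univ.filter (fun i => x i ≠ 0) with hS
  have hScard : ((S.card : ℝ)) ^ (1 - q⁻¹) ≤ c := by
    refine Real.rpow_le_rpow (Nat.cast_nonneg _) (Nat.cast_le.mpr ?_) ?_
    · exact hsparse
    · rw [sub_nonneg]
      exact inv_le_one_of_one_le₀ hq.le
  have hxS : ∑ i ∈ S, |x i| = a1 := by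
    rw [ha1, l1Norm]
    refine Finset.sum_subset (Finset.subset_univ S) (fun i _ hi => ?_)
    simp only [hS, Finset.mem_filter, Finset.mem_univ, true_and, not_not] at hi
    simp [hi]
  have F1 : a1 ≤ c * aq := by
    calc a1 = ∑ i ∈ S, |x i| := hxS.symm
      _ ≤ (S.card : ℝ) ^ (1 - q⁻¹) * aq := holder_subset hq.le S x
      _ ≤ c * aq := mul_le_mul_of_nonneg_right hScard aqpos.le
  have tbound : ∑ i ∈ S, |h i| ≤ c * bq :=
    (holder_subset hq.le S h).trans (mul_le_mul_of_nonneg_right hScard bqpos.le)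
  -- lower bound for l1Norm (x + h)
  have hsplit : ∑ i ∈ S, |x i + h i| + ∑ i ∈ Finset.univ.filter (fun i => ¬ x i ≠ 0), |x i + h i|
      = l1Norm (x + h) := by
    rw [l1Norm]
    simp only [Pi.add_apply]
    exact Finset.sum_filter_add_sum_filter_not Finset.univ _ _
  have hcompl : ∑ i ∈ Finset.univ.filter (fun i => ¬ x i ≠ 0), |x i + h i|
      = ∑ i ∈ Finset.univ.filter (fun i => ¬ x i ≠ 0), |h i| := by
    refine Finset.sum_congr rfl (fun i hi => ?_)
    simp only [Finset.mem_filter, Finset.mem_univ, true_and, not_not] at hi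
    rw [hi, zero_add]
  have b1split : ∑ i ∈ S, |h i| + ∑ i ∈ Finset.univ.filter (fun i => ¬ x i ≠ 0), |h i| = b1 := by
    rw [hb1, l1Norm]
    exact Finset.sum_filter_add_sum_filter_not Finset.univ _ _
  have hlowS : ∑ i ∈ S, |x i| - ∑ i ∈ S, |h i| ≤ ∑ i ∈ S, |x i + h i| := by
    rw [← Finset.sum_sub_distrib]
    refine Finset.sum_le_sum (fun i _ => ?_)
    have := abs_sub_abs_le_abs_sub (x i) (-(h i))
    simpa [sub_neg_eq_add] using this
  have F3 : a1 + b1 - 2 * (∑ i ∈ S, |h i|) ≤ l1Norm (x + h) := by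
    rw [← hsplit, hcompl]
    linarith [hlowS, hxS, b1split]
  have L1big : a1 + b1 - 2 * (c * bq) ≤ l1Norm (x + h) := by linarith
  have L1pos : 0 < l1Norm (x + h) := by nlinarith [mul_nonneg cnn bqpos.le]
  have hxh : x + h ≠ 0 := by
    intro h0
    rw [h0] at L1pos
    simp [l1Norm] at L1pos
  have Lqpos : 0 < lqNorm q (x + h) := lqNorm_pos hq0 hxh
  have F4 : lqNorm q (x + h) ≤ aq + bq := by
    rw [haq, hbq]
    simp only [lqNorm, Pi.add_apply]
    exact Real.Lp_add_le Finset.univ x h hq.le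
  rw [div_lt_div_iff₀ aqpos Lqpos]
  nlinarith [mul_le_mul_of_nonneg_left F4 a1pos.le, mul_le_mul_of_nonneg_right F1 bqpos.le,
    mul_le_mul_of_nonneg_right L1big aqpos.le, mul_lt_mul_of_pos_right key aqpos,
    mul_nonneg cnn bqpos.le]
end

section
/- Let A ∈ R^{m×N}, q ∈ (1,∞), x ∈ R^N k-sparse with support S, and h ∈ ker(A)\{0} with s_q(h) > 3^{q/(q−1)} k. Then (‖h‖₁ − 2‖h_S‖₁)/‖h‖_q > k^{1−1/q} ≥ ‖x‖₁/‖x‖_q. -/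
open Finset

/- By Hölder, a vector supported on at most `k` coordinates has `‖·‖₁ ≤ k^{1-1/q} ‖·‖_q`;
this bounds both `‖x‖₁/‖x‖_q` and `‖h_S‖₁/‖h‖_q` by `k^{1-1/q}`. Raising the sparsity hypothesis to the
power `1 - 1/q` gives `‖h‖₁/‖h‖_q > 3 k^{1-1/q}`, and `3 - 2 = 1`. -/

lemma lqNorm_nonneg {N : ℕ} (q : ℝ) (z : Fin N → ℝ) : 0 ≤ lqNorm q z := by
  unfold lqNorm; positivity

lemma l1Norm_restr {N : ℕ} (z : Fin N → ℝ) (S : Finset (Fin N)) :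
    l1Norm (restr z S) = ∑ i ∈ S, |z i| := by
  simp [l1Norm, restr, apply_ite, Finset.sum_ite_mem]

lemma restr_eq_self_of_support_subset {N : ℕ} {z : Fin N → ℝ} {S : Finset (Fin N)}
    (hsupp : ∀ i, z i ≠ 0 → i ∈ S) : restr z S = z := by
  funext i
  by_cases hi : i ∈ S
  · simp [restr, hi]
  · simp [restr, hi, not_imp_comm.mp (hsupp i) hi]

lemma sum_abs_le_card_rpow_mul_lqNorm {N : ℕ} {q : ℝ} (hq : 1 < q) (z : Fin N → ℝ)
    (T : Finset (Fin N)) : ∑ i ∈ T, |z i| ≤ (T.card : ℝ) ^ (1 - 1 / q) * lqNorm q z := by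
  have hpq : (q / (q - 1)).HolderConjugate q :=
    ((Real.holderConjugate_iff_eq_conjExponent hq).mpr rfl).symm
  have hexp : 1 / (q / (q - 1)) = 1 - 1 / q := by
    field_simp [(sub_pos.mpr hq).ne']
  have holder := Real.inner_le_Lp_mul_Lq T (fun _ => (1 : ℝ)) (fun i => |z i|) hpq
  simp only [one_mul, abs_one, abs_abs, Real.one_rpow, Finset.sum_const, nsmul_eq_mul,
    mul_one, hexp] at holder
  refine holder.trans ?_
  unfold lqNorm
  gcongr
  exact Finset.subset_univ T

lemma l1Norm_restr_le {N : ℕ} {q k : ℝ} (hq : 1 < q) (z : Fin N → ℝ) {S : Finset (Fin N)}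
    (hcard : (S.card : ℝ) ≤ k) : l1Norm (restr z S) ≤ k ^ (1 - 1 / q) * lqNorm q z := by
  rw [l1Norm_restr]
  refine (sum_abs_le_card_rpow_mul_lqNorm hq z S).trans ?_
  have : 0 ≤ 1 - 1 / q := sub_nonneg.mpr ((div_le_one (by linarith)).mpr hq.le)
  gcongr
  exact lqNorm_nonneg q z

lemma lt_l1Norm_div_lqNorm_of_lt_qSparsity {N : ℕ} {q a k : ℝ} (hq : 1 < q) (ha : 0 ≤ a)
    (hk : 0 ≤ k) {z : Fin N → ℝ} (hs : a ^ (q / (q - 1)) * k < qSparsity q z) :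
    a * k ^ (1 - 1 / q) < l1Norm z / lqNorm q z := by
  have hr : 0 < q / (q - 1) := div_pos (by linarith) (by linarith)
  have hexp : (1 - 1 / q) * (q / (q - 1)) = 1 := by
    field_simp [(sub_pos.mpr hq).ne']
  have hratio : 0 ≤ l1Norm z / lqNorm q z :=
    div_nonneg (Finset.sum_nonneg fun i _ => abs_nonneg _) (lqNorm_nonneg q z)
  rw [← Real.rpow_lt_rpow_iff (by positivity) hratio hr, Real.mul_rpow ha (by positivity),
    ← Real.rpow_mul hk, hexp, Real.rpow_one]
  exact hs

theorem nullspace_ratio_bound_general {N : ℕ}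
    (q : ℝ) (hq : 1 < q) (k : ℝ) (x : Fin N → ℝ)
    (S : Finset (Fin N)) (hsupp : ∀ i, x i ≠ 0 → i ∈ S) (hcard : (S.card : ℝ) ≤ k)
    (h : Fin N → ℝ)
    (hsq : qSparsity q h > (3 : ℝ) ^ (q / (q - 1)) * k) :
    (l1Norm h - 2 * l1Norm (restr h S)) / lqNorm q h > k ^ (1 - 1 / q) ∧
      k ^ (1 - 1 / q) ≥ l1Norm x / lqNorm q x := by
  have hk : 0 ≤ k := (Nat.cast_nonneg _).trans hcard
  have hkq : 0 ≤ k ^ (1 - 1 / q) := Real.rpow_nonneg hk _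
  have hratio := lt_l1Norm_div_lqNorm_of_lt_qSparsity hq (by norm_num : (0 : ℝ) ≤ 3) hk hsq
  have hS : l1Norm (restr h S) / lqNorm q h ≤ k ^ (1 - 1 / q) :=
    div_le_of_le_mul₀ (lqNorm_nonneg q h) hkq (l1Norm_restr_le hq h hcard)
  have hx : l1Norm x ≤ k ^ (1 - 1 / q) * lqNorm q x := by
    simpa only [restr_eq_self_of_support_subset hsupp] using l1Norm_restr_le hq x hcard
  constructor
  · rw [sub_div, mul_div_assoc]
    linarith
  · exact div_le_of_le_mul₀ (lqNorm_nonneg q x) hkq hx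

theorem nullspace_ratio_bound {m N : ℕ} (A : Matrix (Fin m) (Fin N) ℝ)
    (q : ℝ) (hq : 1 < q) (k : ℝ) (x : Fin N → ℝ) (hx : x ≠ 0)
    (S : Finset (Fin N)) (hsupp : ∀ i, x i ≠ 0 → i ∈ S) (hcard : (S.card : ℝ) ≤ k)
    (h : Fin N → ℝ) (hker : A.mulVec h = 0) (hh : h ≠ 0)
    (hsq : qSparsity q h > (3 : ℝ) ^ (q / (q - 1)) * k) :
    (l1Norm h - 2 * l1Norm (restr h S)) / lqNorm q h > k ^ (1 - 1 / q) ∧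
      k ^ (1 - 1 / q) ≥ l1Norm x / lqNorm q x :=
  nullspace_ratio_bound_general q hq k x S hsupp hcard h hsq
end

section
/- (Uniqueness in noiseless case via CMSV) Let q ∈ (1,∞) and A ∈ R^{m×N} with ρ_{q,3^{q/(q−1)}k}(A) > 0. Then for any nonzero k-sparse x ∈ R^N, the unique solution of min ‖z‖₁/‖z‖_q subject to Az = Ax is x itself. -/
open Finset

/-!
If `z ≠ x` has `Az = Ax` and a ratio `‖z‖₁/‖z‖_q` no larger than that of the `k`-sparse `x`,
then `h = z - x` lies in the kernel of `A`. Hölder gives `‖x‖₁ ≤ k^(1-1/q) ‖x‖_q` and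
`‖h_S‖₁ ≤ k^(1-1/q) ‖h‖_q` on the support `S` of `x`; together with Minkowski and the reverse
triangle inequality on `S` this yields `‖h‖₁ ≤ 3 k^(1-1/q) ‖h‖_q`, i.e.
`s_q(h) ≤ 3^(q/(q-1)) k`. The CMSV bound then forces `ρ ≤ ‖Ah‖₂/‖h‖_q = 0`.
-/

namespace SparseRecovery

variable {N : ℕ}

lemma l1Norm_nonneg (z : Fin N → ℝ) : 0 ≤ l1Norm z :=
  Finset.sum_nonneg fun _ _ => abs_nonneg _

lemma lqNorm_nonneg (q : ℝ) (z : Fin N → ℝ) : 0 ≤ lqNorm q z :=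
  Real.rpow_nonneg (Finset.sum_nonneg fun _ _ => Real.rpow_nonneg (abs_nonneg _) q) _

lemma lqNorm_pos (q : ℝ) {z : Fin N → ℝ} (hz : z ≠ 0) : 0 < lqNorm q z := by
  obtain ⟨i, hi⟩ := Function.ne_iff.mp hz
  have hterm : 0 < |z i| ^ q := Real.rpow_pos_of_pos (abs_pos.mpr hi) q
  have hsum : 0 < ∑ j, |z j| ^ q :=
    hterm.trans_le (Finset.single_le_sum (fun j _ => Real.rpow_nonneg (abs_nonneg _) q)
      (mem_univ i))
  exact Real.rpow_pos_of_pos hsum _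

lemma lqNorm_add_le {q : ℝ} (hq : 1 ≤ q) (x y : Fin N → ℝ) :
    lqNorm q (x + y) ≤ lqNorm q x + lqNorm q y :=
  Real.Lp_add_le univ x y hq

lemma sum_abs_le_rpow_mul_lqNorm {q : ℝ} (hq : 1 < q) {S : Finset (Fin N)} {k : ℕ}
    (hS : #S ≤ k) (h : Fin N → ℝ) :
    ∑ i ∈ S, |h i| ≤ (k : ℝ) ^ (1 - 1 / q) * lqNorm q h := by
  have hq0 : 0 < q := one_pos.trans hq
  have hconj : (q / (q - 1)).HolderConjugate q := (Real.HolderConjugate.conjExponent hq).symm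
  have holder := Real.inner_le_Lp_mul_Lq S (fun _ => (1 : ℝ)) (fun i => |h i|) hconj
  have hexp : 1 / (q / (q - 1)) = 1 - 1 / q := by field_simp
  simp only [one_mul, abs_abs, abs_one, Real.one_rpow, sum_const, nsmul_eq_mul, mul_one,
    hexp] at holder
  refine holder.trans (mul_le_mul ?_ ?_ (by positivity) (by positivity))
  · have : 0 ≤ 1 - 1 / q := by rw [sub_nonneg, div_le_one hq0]; exact hq.le
    exact Real.rpow_le_rpow (Nat.cast_nonneg _) (by exact_mod_cast hS) this
  · exact Real.rpow_le_rpow (by positivity)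
      (sum_le_sum_of_subset_of_nonneg (subset_univ S) fun i _ _ => by positivity)
      (by positivity)

lemma l1Norm_le_rpow_mul_lqNorm {q : ℝ} (hq : 1 < q) {k : ℕ} {x : Fin N → ℝ}
    (hx : l0Norm x ≤ k) : l1Norm x ≤ (k : ℝ) ^ (1 - 1 / q) * lqNorm q x := by
  have hsupp : l1Norm x = ∑ i ∈ univ.filter (x · ≠ 0), |x i| :=
    (sum_filter_of_ne fun i _ hi => abs_ne_zero.mp hi).symm
  rw [hsupp]
  exact sum_abs_le_rpow_mul_lqNorm hq hx x

lemma l1Norm_sub_sum_add_sum_compl_le {x : Fin N → ℝ} {S : Finset (Fin N)}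
    (hx : ∀ i ∉ S, x i = 0) (h : Fin N → ℝ) :
    l1Norm x - ∑ i ∈ S, |h i| + ∑ i ∈ Sᶜ, |h i| ≤ l1Norm (x + h) := by
  have hxS : l1Norm x = ∑ i ∈ S, |x i| := by
    rw [l1Norm, ← sum_add_sum_compl S, sum_eq_zero (s := Sᶜ) fun i hi => by
      simp [hx i (mem_compl.mp hi)], add_zero]
  have hon : ∑ i ∈ S, |x i| - ∑ i ∈ S, |h i| ≤ ∑ i ∈ S, |(x + h) i| := by
    rw [← sum_sub_distrib]
    exact sum_le_sum fun i _ => by simpa using abs_sub_abs_le_abs_add (x i) (h i)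
  have hoff : ∑ i ∈ Sᶜ, |h i| = ∑ i ∈ Sᶜ, |(x + h) i| :=
    sum_congr rfl fun i hi => by simp [hx i (mem_compl.mp hi)]
  rw [hxS, l1Norm, ← sum_add_sum_compl S, hoff]
  linarith

lemma l1Norm_le_add_of_ratio_le {q c : ℝ} (hq : 1 ≤ q) {x z : Fin N → ℝ}
    (hx : x ≠ 0) (hz : z ≠ 0) (hxc : l1Norm x ≤ c * lqNorm q x)
    (hratio : l1Norm z / lqNorm q z ≤ l1Norm x / lqNorm q x) :
    l1Norm z ≤ l1Norm x + c * lqNorm q (z - x) := by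
  set r := l1Norm x / lqNorm q x
  have hxq := lqNorm_pos q hx
  have hr : 0 ≤ r := div_nonneg (l1Norm_nonneg x) hxq.le
  have hrc : r ≤ c := (div_le_iff₀ hxq).mpr hxc
  have hminkowski : lqNorm q z ≤ lqNorm q x + lqNorm q (z - x) := by
    simpa using lqNorm_add_le hq x (z - x)
  calc l1Norm z ≤ r * lqNorm q z := (div_le_iff₀ (lqNorm_pos q hz)).mp hratio
    _ ≤ r * (lqNorm q x + lqNorm q (z - x)) := mul_le_mul_of_nonneg_left hminkowski hr
    _ = l1Norm x + r * lqNorm q (z - x) := by rw [mul_add, div_mul_cancel₀ _ hxq.ne']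
    _ ≤ l1Norm x + c * lqNorm q (z - x) := by
      gcongr
      exact lqNorm_nonneg q _

lemma l1Norm_sub_le_of_ratio_le {q : ℝ} (hq : 1 < q) {k : ℕ} {x z : Fin N → ℝ}
    (hx : x ≠ 0) (hxk : l0Norm x ≤ k) (hz : z ≠ 0)
    (hratio : l1Norm z / lqNorm q z ≤ l1Norm x / lqNorm q x) :
    l1Norm (z - x) ≤ 3 * (k : ℝ) ^ (1 - 1 / q) * lqNorm q (z - x) := by
  set S := univ.filter (x · ≠ 0)
  set c := (k : ℝ) ^ (1 - 1 / q)
  have hon : ∑ i ∈ S, |(z - x) i| ≤ c * lqNorm q (z - x) :=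
    sum_abs_le_rpow_mul_lqNorm hq hxk _
  have hupper : l1Norm z ≤ l1Norm x + c * lqNorm q (z - x) :=
    l1Norm_le_add_of_ratio_le hq.le hx hz (l1Norm_le_rpow_mul_lqNorm hq hxk) hratio
  have hlower := l1Norm_sub_sum_add_sum_compl_le (S := S) (fun i hi => by simpa [S] using hi)
    (z - x)
  rw [add_sub_cancel] at hlower
  rw [l1Norm, ← sum_add_sum_compl S]
  linarith

lemma qSparsity_le_of_l1Norm_le {q a : ℝ} (hq : 1 < q) (ha : 0 ≤ a) {k : ℕ}
    {h : Fin N → ℝ} (hh : l1Norm h ≤ a * (k : ℝ) ^ (1 - 1 / q) * lqNorm q h) :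
    qSparsity q h ≤ a ^ (q / (q - 1)) * k := by
  have hq' : 0 < q - 1 := sub_pos.mpr hq
  have hratio : l1Norm h / lqNorm q h ≤ a * (k : ℝ) ^ (1 - 1 / q) :=
    div_le_of_le_mul₀ (lqNorm_nonneg q h) (by positivity) hh
  have hexp : (1 - 1 / q) * (q / (q - 1)) = 1 := by field_simp
  calc qSparsity q h ≤ (a * (k : ℝ) ^ (1 - 1 / q)) ^ (q / (q - 1)) :=
        Real.rpow_le_rpow (div_nonneg (l1Norm_nonneg h) (lqNorm_nonneg q h)) hratio
          (by positivity)
    _ = a ^ (q / (q - 1)) * k := by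
      rw [Real.mul_rpow ha (by positivity), ← Real.rpow_mul (Nat.cast_nonneg k), hexp,
        Real.rpow_one]

end SparseRecovery

open SparseRecovery in
theorem noiseless_uniqueness_via_CMSV {m N : ℕ} (A : Matrix (Fin m) (Fin N) ℝ)
    (q : ℝ) (hq : 1 < q) (k : ℕ) (ρ : ℝ) (hρpos : 0 < ρ)
    (hρ : ∀ z : Fin N → ℝ, z ≠ 0 → qSparsity q z ≤ (3 : ℝ) ^ (q / (q - 1)) * (k : ℝ) →
      ρ ≤ l2Norm (A.mulVec z) / lqNorm q z) :
    ∀ x : Fin N → ℝ, x ≠ 0 → l0Norm x ≤ k →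
      ∀ z : Fin N → ℝ, z ≠ 0 → A.mulVec z = A.mulVec x → z ≠ x →
        l1Norm x / lqNorm q x < l1Norm z / lqNorm q z := by
  intro x hx hxk z hz hAzx hzx
  by_contra! hratio
  have hsparse : qSparsity q (z - x) ≤ (3 : ℝ) ^ (q / (q - 1)) * k :=
    qSparsity_le_of_l1Norm_le hq (by norm_num) (l1Norm_sub_le_of_ratio_le hq hx hxk hz hratio)
  have hkernel : A.mulVec (z - x) = 0 := by rw [Matrix.mulVec_sub, hAzx, sub_self]
  have hρle := hρ (z - x) (sub_ne_zero.mpr hzx) hsparse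
  simp only [hkernel, l2Norm, Pi.zero_apply, ne_eq, OfNat.ofNat_ne_zero, not_false_eq_true,
    zero_pow, sum_const_zero, Real.sqrt_zero, zero_div] at hρle
  linarith
end

section
/- If F(λ) = inf_{z∈D}(λ‖z‖₁ − ‖z‖_q) = 0 and x' ∈ D attains this infimum (λ‖x'‖₁ − ‖x'‖_q = 0, x' ≠ 0), then x' minimizes ‖z‖₁/‖z‖_q over D, provided λ = ‖x̄‖_q/‖x̄‖₁ for a minimizer x̄ of ‖z‖₁/‖z‖_q over D. -/
open Finset

theorem parametric_optimal_solution {N : ℕ} (q : ℝ) (hq : 1 < q)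
    (D : Set (Fin N → ℝ)) (hD0 : ∀ z ∈ D, z ≠ 0)
    (xbar : Fin N → ℝ) (hxbar : xbar ∈ D)
    (hxbarmin : ∀ z ∈ D, l1Norm xbar / lqNorm q xbar ≤ l1Norm z / lqNorm q z)
    (lam : ℝ) (hlam : lam = lqNorm q xbar / l1Norm xbar)
    (x' : Fin N → ℝ) (hx' : x' ∈ D)
    (hattain : ∀ w ∈ D, lam * l1Norm x' - lqNorm q x' ≤ lam * l1Norm w - lqNorm q w)
    (hzero : lam * l1Norm x' - lqNorm q x' = 0) :
    ∀ z ∈ D, l1Norm x' / lqNorm q x' ≤ l1Norm z / lqNorm q z := by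
  intro z hz
  have hq0 : (0:ℝ) < q := lt_trans one_pos hq
  have h1b : 0 < l1Norm xbar := l1Norm_pos (hD0 _ hxbar)
  have hqb : 0 < lqNorm q xbar := lqNorm_pos hq0 (hD0 _ hxbar)
  have h1x : 0 < l1Norm x' := l1Norm_pos (hD0 _ hx')
  have hqx : 0 < lqNorm q x' := lqNorm_pos hq0 (hD0 _ hx')
  have hlam0 : 0 < lam := by rw [hlam]; positivity
  have hx'eq : lqNorm q x' = lam * l1Norm x' := by linarith
  have : l1Norm x' / lqNorm q x' = l1Norm xbar / lqNorm q xbar := by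
    rw [hx'eq, hlam]
    field_simp
  rw [this]
  exact hxbarmin z hz
end
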